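/- arXiv:2405.00488 — 4 statements merged into one kernel-verified Lean document; each statement's English description precedes it below -/
import Mathlib

section
/- Let i : B' → B and k : B → C be 1-cells in a 2-category, f : B' → D a 1-cell, h : C → D a 1-cell, and α : f ⇒ (h ∘ k) ∘ i a 2-cell. Suppose that (h, δ) is a left Kan extension of h ∘ k along k, that the pasting of α with δ exhibits h as the left Kan extension of f along k ∘ i, and that for every 1-cell l : B → D the left Kan extension of l along k exists with invertible unit. Then α exhibits h ∘ k as the left Kan extension of f along i. -/
open CategoryTheory Bicategory

universe w v u

variable {K : Type u} [Bicategory.{w, v} K]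

/-- `(l', λ')` exhibits `l'` as a left Kan extension of `l` along `j`. -/
def IsLeftKan {A' A C : K} (j : A' ⟶ A) (l : A' ⟶ C) (l' : A ⟶ C) (lam : l ⟶ j ≫ l') : Prop :=
  ∀ (m : A ⟶ C) (μ : l ⟶ j ≫ m), ∃! θ : l' ⟶ m, lam ≫ j ◁ θ = μ

/-- if `(h, δ)` is a left Kan extension of `k ≫ h` along `k`, the pasting of
`α : f ⟶ i ≫ (k ≫ h)` with `δ` exhibits `h` as a left Kan extension of `f` along `i ≫ k`,
and all left Kan extensions along `k` exist with invertible unit, then `α` exhibits `k ≫ h`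
as a left Kan extension of `f` along `i`. -/
theorem isLeftKan_cancel {B' B C D : K} (i : B' ⟶ B) (k : B ⟶ C) (f : B' ⟶ D) (h : C ⟶ D)
    (α : f ⟶ i ≫ (k ≫ h)) (δ : k ≫ h ⟶ k ≫ h)
    (htop : IsLeftKan k (k ≫ h) h δ)
    (houter : IsLeftKan (i ≫ k) f h (α ≫ i ◁ δ ≫ (α_ i k h).inv))
    (hall : ∀ l : B ⟶ D, ∃ (l' : C ⟶ D) (lam : l ⟶ k ≫ l'),
      IsLeftKan k l l' lam ∧ IsIso lam) :
    IsLeftKan i f (k ≫ h) α := by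
  intro m μ
  obtain ⟨m', lam, hkan, hiso⟩ := hall m
  obtain ⟨θ', hθ', huniq⟩ := houter m' (μ ≫ i ◁ lam ≫ (α_ i k m').inv)
  have h1 : α ≫ i ◁ δ ≫ i ◁ (k ◁ θ') = μ ≫ i ◁ lam := by
    have h2 := hθ'
    simp only [comp_whiskerLeft, Category.assoc, Iso.inv_hom_id_assoc] at h2
    simpa using h2 =≫ (α_ i k m').hom
  refine ⟨δ ≫ k ◁ θ' ≫ inv lam, ?_, ?_⟩
  · calc α ≫ i ◁ (δ ≫ k ◁ θ' ≫ inv lam)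
        = (α ≫ i ◁ δ ≫ i ◁ (k ◁ θ')) ≫ i ◁ inv lam := by
          simp [Bicategory.whiskerLeft_comp]
      _ = (μ ≫ i ◁ lam) ≫ i ◁ inv lam := by rw [h1]
      _ = μ := by
          rw [Category.assoc, ← Bicategory.whiskerLeft_comp]
          simp
  · intro θ hθ
    obtain ⟨σ, hσ, _⟩ := htop m' (θ ≫ lam)
    have h3 : α ≫ i ◁ δ ≫ i ◁ (k ◁ σ) = μ ≫ i ◁ lam := by
      rw [← Bicategory.whiskerLeft_comp, hσ, Bicategory.whiskerLeft_comp,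
        ← Category.assoc, hθ]
    have hσθ : σ = θ' := by
      apply huniq
      simp only [comp_whiskerLeft, Category.assoc, Iso.inv_hom_id_assoc]
      rw [reassoc_of% h3]
    have h4 : θ ≫ lam = δ ≫ k ◁ θ' := by rw [← hσθ, hσ]
    simp only [← Category.assoc]
    rw [IsIso.eq_comp_inv]
    exact h4
end

section
/- Let U : C → D be a 2-functor between 2-categories and let y_A : A → UFA be a collection of 1-cells strictly closed for U-extensions (every f : A → UB has a U-extension (f^D, 1_f) with identity 2-cell; y_A^D = 1_{FA}; F(gf) = Fg ∘ Ff where Ff := (y_Y ∘ f)^D; and ε_Y ∘ Ff = f^D where ε_Y := (1_Y)^D). Then F extends to a 2-functor, y is a 2-natural transformation 1 ⇒ UF, ε is a colax natural transformation FU ⇒ 1, and (ε, y) : F ⊣⊣ U is a colax adjunction in which both triangle modifications are identities. -/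
open CategoryTheory Bicategory

universe w₁ v₁ u₁ w₂ v₂ u₂

/-- A strict 2-functor between 2-categories (strict bicategories). -/
structure StrictTwoFunctor (C : Type u₁) (D : Type u₂) [Bicategory.{w₁, v₁} C]
    [Bicategory.{w₂, v₂} D] where
  obj : C → D
  map : ∀ {a b : C}, (a ⟶ b) → (obj a ⟶ obj b)
  map₂ : ∀ {a b : C} {f g : a ⟶ b}, (f ⟶ g) → (map f ⟶ map g)
  map_id : ∀ a : C, map (𝟙 a) = 𝟙 (obj a)
  map_comp : ∀ {a b c : C} (f : a ⟶ b) (g : b ⟶ c), map (f ≫ g) = map f ≫ map g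
  map₂_id : ∀ {a b : C} (f : a ⟶ b), map₂ (𝟙 f) = 𝟙 (map f)
  map₂_comp : ∀ {a b : C} {f g h : a ⟶ b} (η : f ⟶ g) (θ : g ⟶ h),
    map₂ (η ≫ θ) = map₂ η ≫ map₂ θ
  map₂_whisker_left : ∀ {a b c : C} (f : a ⟶ b) {g h : b ⟶ c} (η : g ⟶ h),
    map₂ (f ◁ η) = eqToHom (map_comp f g) ≫ map f ◁ map₂ η ≫ eqToHom (map_comp f h).symm
  map₂_whisker_right : ∀ {a b c : C} {f g : a ⟶ b} (η : f ⟶ g) (h : b ⟶ c),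
    map₂ (η ▷ h) = eqToHom (map_comp f h) ≫ map₂ η ▷ map h ≫ eqToHom (map_comp g h).symm


section AuxStrict

universe w v u
variable {B : Type u} [Bicategory.{w, v} B] [Bicategory.Strict B]

theorem aux_wl_congr {a b c : B} {p q : a ⟶ b} (e : p = q) {g h : b ⟶ c} (X : g ⟶ h) :
    q ◁ X = eqToHom (by rw [e]) ≫ p ◁ X ≫ eqToHom (by rw [e]) := by
  subst e; simp

theorem aux_wr_congr {a b c : B} {p q : b ⟶ c} (e : p = q) {g h : a ⟶ b} (X : g ⟶ h) :
    X ▷ q = eqToHom (by rw [e]) ≫ X ▷ p ≫ eqToHom (by rw [e]) := by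
  subst e; simp

theorem aux_wr_dbl {a b c d : B} {f g : a ⟶ b} (X : f ⟶ g) (p : b ⟶ c) (q : c ⟶ d) :
    (X ▷ p) ▷ q = eqToHom (Bicategory.Strict.assoc f p q) ≫ X ▷ (p ≫ q) ≫
      eqToHom (Bicategory.Strict.assoc g p q).symm := by
  rw [Bicategory.whiskerRight_comp]
  simp [Bicategory.Strict.associator_eqToIso]

theorem aux_wl_wr {a b c d : B} (p : a ⟶ b) {g h : b ⟶ c} (η : g ⟶ h) (q : c ⟶ d) :
    p ◁ (η ▷ q) = eqToHom (Bicategory.Strict.assoc p g q).symm ≫ (p ◁ η) ▷ q ≫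
      eqToHom (Bicategory.Strict.assoc p h q) := by
  rw [Bicategory.whisker_assoc]
  simp [Bicategory.Strict.associator_eqToIso]

end AuxStrict

variable {C : Type u₁} [Bicategory.{w₁, v₁} C] [Bicategory.Strict C]
variable {D : Type u₂} [Bicategory.{w₂, v₂} D] [Bicategory.Strict D]

set_option linter.unusedSectionVars false in
theorem aux_map₂_eqToHom (U : StrictTwoFunctor C D) {a b : C} {f g : a ⟶ b} (e : f = g) :
    U.map₂ (eqToHom e) = eqToHom (congrArg U.map e) := by
  subst e; simp [U.map₂_id]

section

variable (U : StrictTwoFunctor C D) (Fobj : D → C) (y : ∀ A : D, A ⟶ U.obj (Fobj A))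
  (ext : ∀ {A : D} {B : C}, (A ⟶ U.obj B) → (Fobj A ⟶ B))

/-- The conclusion of STATEMENT 6: the data making `F` a 2-functor, `y` a 2-natural
transformation `1 ⇒ UF`, `ε` a colax natural transformation `FU ⇒ 1`, and `(ε, y) : F ⊣⊣ U`
a colax adjunction whose triangle modifications are identities.  Here
`FM f = (y_B ∘ f)^𝔻` and `εapp Y = (𝟙 (U Y))^𝔻`. -/
structure StrictColaxAdjunctionOut where
  /-- the action of the left colax adjoint 2-functor `F` on 2-cells -/
  map₂ : ∀ {A B : D} {f g : A ⟶ B}, (f ⟶ g) → (ext (f ≫ y B) ⟶ ext (g ≫ y B))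
  map₂_id : ∀ {A B : D} (f : A ⟶ B), map₂ (𝟙 f) = 𝟙 (ext (f ≫ y B))
  map₂_comp : ∀ {A B : D} {f g h : A ⟶ B} (η : f ⟶ g) (θ : g ⟶ h),
    map₂ (η ≫ θ) = map₂ η ≫ map₂ θ
  /-- `F` preserves identities -/
  map_id : ∀ A : D, ext (𝟙 A ≫ y A) = 𝟙 (Fobj A)
  /-- `F` preserves composition -/
  map_comp : ∀ {A B E : D} (f : A ⟶ B) (g : B ⟶ E),
    ext ((f ≫ g) ≫ y E) = ext (f ≫ y B) ≫ ext (g ≫ y E)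
  /-- `F` preserves left whiskering -/
  map₂_whisker_left : ∀ {A B E : D} (f : A ⟶ B) {g h : B ⟶ E} (η : g ⟶ h),
    map₂ (f ◁ η) = eqToHom (map_comp f g) ≫ ext (f ≫ y B) ◁ map₂ η ≫
      eqToHom (map_comp f h).symm
  /-- `F` preserves right whiskering -/
  map₂_whisker_right : ∀ {A B E : D} {f g : A ⟶ B} (η : f ⟶ g) (h : B ⟶ E),
    map₂ (η ▷ h) = eqToHom (map_comp f h) ≫ map₂ η ▷ ext (h ≫ y E) ≫
      eqToHom (map_comp g h).symm
  /-- 1-cell 2-naturality of `y : 1 ⇒ UF` -/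
  y_nat : ∀ {A B : D} (f : A ⟶ B), f ≫ y B = y A ≫ U.map (ext (f ≫ y B))
  /-- 2-cell 2-naturality of `y : 1 ⇒ UF` -/
  y_nat₂ : ∀ {A B : D} {f g : A ⟶ B} (η : f ⟶ g),
    η ▷ y B ≫ eqToHom (y_nat g) = eqToHom (y_nat f) ≫ y A ◁ U.map₂ (map₂ η)
  /-- colax naturality 2-cells for `ε : FU ⇒ 1` -/
  εnat : ∀ {X Y : C} (h : X ⟶ Y),
    ext (U.map h ≫ y (U.obj Y)) ≫ ext (𝟙 (U.obj Y)) ⟶ ext (𝟙 (U.obj X)) ≫ h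
  /-- local naturality of `ε` -/
  ε_natural : ∀ {X Y : C} {h k : X ⟶ Y} (θ : h ⟶ k),
    map₂ (U.map₂ θ) ▷ ext (𝟙 (U.obj Y)) ≫ εnat k = εnat h ≫ ext (𝟙 (U.obj X)) ◁ θ
  /-- unit axiom for the colax natural `ε` -/
  ε_id : ∀ X : C, εnat (𝟙 X) = eqToHom (by
    rw [U.map_id, map_id, Bicategory.Strict.id_comp, Bicategory.Strict.comp_id])
  /-- composition axiom for the colax natural `ε` -/
  ε_comp : ∀ {X Y Z : C} (h : X ⟶ Y) (k : Y ⟶ Z),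
    εnat (h ≫ k) =
      eqToHom (by rw [U.map_comp, map_comp, Bicategory.Strict.assoc]) ≫
      ext (U.map h ≫ y (U.obj Y)) ◁ εnat k ≫
      eqToHom (by rw [Bicategory.Strict.assoc]) ≫
      εnat h ▷ k ≫
      eqToHom (by rw [Bicategory.Strict.assoc])
  /-- the first triangle modification `Ψ` is the identity -/
  triangle₁ : ∀ A : D, ext (y A ≫ y (U.obj (Fobj A))) ≫ ext (𝟙 (U.obj (Fobj A))) = 𝟙 (Fobj A)
  /-- the second triangle modification `Φ` is the identity -/
  triangle₂ : ∀ X : C, y (U.obj X) ≫ U.map (ext (𝟙 (U.obj X))) = 𝟙 (U.obj X)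

end

/-- if the 1-cells `y_A : A ⟶ U (F A)` are strictly closed for `U`-extensions,
then `F` extends to a 2-functor, `y` is a 2-natural transformation `1 ⇒ UF`, `ε` (with
`ε_Y := (𝟙 Y)^𝔻`) is a colax natural transformation `FU ⇒ 1`, and `(ε, y) : F ⊣⊣ U` is a
colax adjunction in which both triangle modifications are identities. -/
theorem strict_Uextensions_colax_adjunction
    (U : StrictTwoFunctor C D) (Fobj : D → C) (y : ∀ A : D, A ⟶ U.obj (Fobj A))
    (ext : ∀ {A : D} {B : C}, (A ⟶ U.obj B) → (Fobj A ⟶ B))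
    -- every `f : A ⟶ U B` has a `U`-extension `(f^𝔻, 𝟙)` with identity 2-cell:
    (hcomm : ∀ {A : D} {B : C} (f : A ⟶ U.obj B), y A ≫ U.map (ext f) = f)
    (huniv : ∀ {A : D} {B : C} (f : A ⟶ U.obj B) (g : Fobj A ⟶ B)
      (α : f ⟶ y A ≫ U.map g),
      ∃! θ : ext f ⟶ g, eqToHom (hcomm f).symm ≫ y A ◁ U.map₂ θ = α)
    -- `y_A^𝔻 = 𝟙 (F A)`:
    (hunit : ∀ A : D, ext (y A) = 𝟙 (Fobj A))
    -- `F g ∘ F f = F (g ∘ f)` where `F f := (y ∘ f)^𝔻`: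
    (hFcomp : ∀ {X Y Z : D} (f : X ⟶ Y) (g : Y ⟶ Z),
      ext (f ≫ y Y) ≫ ext (g ≫ y Z) = ext ((f ≫ g) ≫ y Z))
    -- `ε_Y ∘ F f = f^𝔻` where `ε_Y := (𝟙 Y)^𝔻`:
    (hε : ∀ {A : D} {B : C} (f : A ⟶ U.obj B),
      ext (f ≫ y (U.obj B)) ≫ ext (𝟙 (U.obj B)) = ext f) :
    Nonempty (StrictColaxAdjunctionOut U Fobj y @ext) := by
  classical
  -- injectivity of `θ ↦ y ◁ U.map₂ θ` on cells out of `ext f`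
  have whisk_inj : ∀ {A : D} {B : C} (f : A ⟶ U.obj B) (g : Fobj A ⟶ B)
      (θ₁ θ₂ : ext f ⟶ g), y A ◁ U.map₂ θ₁ = y A ◁ U.map₂ θ₂ → θ₁ = θ₂ := by
    intro A B f g θ₁ θ₂ h
    obtain ⟨θ, -, hu⟩ := huniv f g (eqToHom (hcomm f).symm ≫ y A ◁ U.map₂ θ₁)
    rw [hu θ₁ rfl, hu θ₂ (by rw [h])]
  have mk : ∀ {A : D} {B : C} (f : A ⟶ U.obj B) (g : Fobj A ⟶ B)
      (α : f ⟶ y A ≫ U.map g), ∃ θ : ext f ⟶ g,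
        y A ◁ U.map₂ θ = eqToHom (hcomm f) ≫ α := by
    intro A B f g α
    obtain ⟨θ, hθ, -⟩ := huniv f g α
    exact ⟨θ, by rw [← hθ, ← Category.assoc, eqToHom_trans, eqToHom_refl, Category.id_comp]⟩
  -- the action of F on 2-cells
  choose E₀ hE using fun (A B : D) (f g : A ⟶ B) (η : f ⟶ g) =>
    mk (f ≫ y B) (ext (g ≫ y B)) (η ▷ y B ≫ eqToHom (hcomm (g ≫ y B)).symm)
  -- the colax naturality cells of ε
  have eε : ∀ {X Y : C} (h : X ⟶ Y),
      U.map h = y (U.obj X) ≫ U.map (ext (𝟙 (U.obj X)) ≫ h) := by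
    intro X Y h
    rw [StrictTwoFunctor.map_comp, ← Category.assoc, hcomm, Category.id_comp]
  choose ε₀ hε0 using fun (X Y : C) (h : X ⟶ Y) =>
    mk (U.map h) (ext (𝟙 (U.obj X)) ≫ h) (eqToHom (eε h))
  have hε2 : ∀ (X Y : C) (h : X ⟶ Y),
      y (U.obj X) ◁ U.map₂ (ε₀ X Y h) = eqToHom ((hcomm (U.map h)).trans (eε h)) := by
    intro X Y h
    rw [hε0, eqToHom_trans]
  -- merging lemmas
  have W1 : ∀ {A : D} {B : C} {c : D} (w : A ⟶ U.obj B) {g h : U.obj B ⟶ c} (X : g ⟶ h),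
      y A ◁ U.map (ext w) ◁ X =
        eqToHom (by rw [← Category.assoc, hcomm]) ≫ w ◁ X ≫
        eqToHom (by rw [← Category.assoc, hcomm]) := by
    intro A B c w g h X
    rw [aux_wl_congr (hcomm w) X]
    simp [Bicategory.Strict.associator_eqToIso]
  have W2 : ∀ {A₁ A₂ : D} {B₂ : C} {f g : A₁ ⟶ A₂} (X : f ⟶ g) (w : A₂ ⟶ U.obj B₂),
      (X ▷ y A₂) ▷ U.map (ext w) =
        eqToHom (by rw [Category.assoc, hcomm]) ≫ X ▷ w ≫
        eqToHom (by rw [Category.assoc, hcomm]) := by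
    intro A₁ A₂ B₂ f g X w
    rw [aux_wr_congr (hcomm w) X, aux_wr_dbl]
    simp
  -- evaluation of `y ◁ (U.map₂ (E₀ ...) ▷ q)`
  have WE1 : ∀ {A B : D} {f g : A ⟶ B} (η : f ⟶ g) {c : D} (q : U.obj (Fobj B) ⟶ c),
      y A ◁ (U.map₂ (E₀ A B f g η) ▷ q) =
        eqToHom (by rw [← Category.assoc, hcomm]) ≫ (η ▷ y B) ▷ q ≫
        eqToHom (by rw [← Category.assoc, hcomm]) := by
    intro A B f g η c q
    rw [aux_wl_wr, hE]
    simp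
  have eWq : ∀ {X Y : C} (h : X ⟶ Y) {c : D} (q : U.obj Y ⟶ c),
      y (U.obj X) ≫ U.map (ext (U.map h)) ≫ q
        = y (U.obj X) ≫ U.map (ext (𝟙 (U.obj X)) ≫ h) ≫ q := by
    intro X Y h c q
    simp [StrictTwoFunctor.map_comp, ← Category.assoc, hcomm]
  have WEε : ∀ {X Y : C} (h : X ⟶ Y) {c : D} (q : U.obj Y ⟶ c),
      y (U.obj X) ◁ (U.map₂ (ε₀ X Y h) ▷ q) = eqToHom (eWq h q) := by
    intro X Y h c q
    rw [aux_wl_wr, hε2]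
    simp
  refine ⟨{
    map₂ := fun {A B f g} η => E₀ A B f g η
    map₂_id := ?_
    map₂_comp := ?_
    map_id := fun A => by rw [Category.id_comp (y A), hunit]
    map_comp := fun f g => (hFcomp f g).symm
    map₂_whisker_left := ?_
    map₂_whisker_right := ?_
    y_nat := fun f => (hcomm (f ≫ y _)).symm
    y_nat₂ := ?_
    εnat := fun {X Y} h => eqToHom (hε (U.map h)) ≫ ε₀ X Y h
    ε_natural := ?_
    ε_id := ?_
    ε_comp := ?_
    triangle₁ := fun A => by rw [hε (y A), hunit]
    triangle₂ := fun X => hcomm (𝟙 (U.obj X)) }⟩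
  · -- map₂_id
    intro A B f
    refine whisk_inj _ _ _ _ ?_
    simp [hE, StrictTwoFunctor.map₂_id]
  · -- map₂_comp
    intro A B f g h η θ
    refine whisk_inj _ _ _ _ ?_
    simp only [StrictTwoFunctor.map₂_comp]
    simp [hE]
  · -- map₂_whisker_left
    intro A B E f g h η
    refine whisk_inj _ _ _ _ ?_
    simp only [StrictTwoFunctor.map₂_comp, StrictTwoFunctor.map₂_whisker_left, StrictTwoFunctor.map₂_whisker_right, aux_map₂_eqToHom,
      Bicategory.whiskerLeft_comp, Bicategory.whiskerLeft_eqToHom]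
    simp [hE, W1, Bicategory.Strict.associator_eqToIso]
  · -- map₂_whisker_right
    intro A B E f g h η
    refine whisk_inj _ _ _ _ ?_
    simp only [StrictTwoFunctor.map₂_comp, StrictTwoFunctor.map₂_whisker_left, StrictTwoFunctor.map₂_whisker_right, aux_map₂_eqToHom,
      Bicategory.whiskerLeft_comp, Bicategory.whiskerLeft_eqToHom]
    simp [hE, WE1, W2, Bicategory.Strict.associator_eqToIso]
  · -- y_nat₂
    intro A B f g η
    rw [hE]
    simp
  · -- ε_natural
    intro X Y h k θ
    rw [← cancel_epi (eqToHom (hε (U.map h)).symm)]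
    refine whisk_inj _ _ _ _ ?_
    simp only [StrictTwoFunctor.map₂_comp, StrictTwoFunctor.map₂_whisker_left, StrictTwoFunctor.map₂_whisker_right, aux_map₂_eqToHom,
      Bicategory.whiskerLeft_comp, Bicategory.whiskerLeft_eqToHom]
    simp [hE, hε2, WE1, W1, W2,
      Bicategory.Strict.associator_eqToIso, Bicategory.Strict.leftUnitor_eqToIso,
      Bicategory.Strict.rightUnitor_eqToIso]
  · -- ε_id
    intro X
    rw [← cancel_epi (eqToHom (hε (U.map (𝟙 X))).symm)]
    refine whisk_inj _ _ _ _ ?_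
    simp only [StrictTwoFunctor.map₂_comp, StrictTwoFunctor.map₂_whisker_left, StrictTwoFunctor.map₂_whisker_right, aux_map₂_eqToHom,
      Bicategory.whiskerLeft_comp, Bicategory.whiskerLeft_eqToHom]
    simp [hε2]
  · -- ε_comp
    intro X Y Z h k
    rw [← cancel_epi (eqToHom (hε (U.map (h ≫ k))).symm)]
    refine whisk_inj _ _ _ _ ?_
    simp only [StrictTwoFunctor.map₂_comp, StrictTwoFunctor.map₂_whisker_left, StrictTwoFunctor.map₂_whisker_right, aux_map₂_eqToHom,
      Bicategory.whiskerLeft_comp, Bicategory.whiskerLeft_eqToHom]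
    simp [hε2, WEε, W1, W2, Bicategory.Strict.associator_eqToIso]
end

section
/- Let (Ψ, Φ) : (ε, y) : F ⊣⊣ U : C → D be a colax adjunction between pseudofunctors with Ψ invertible. Then for every 1-cell f : A → B in D, the pair (UFf, y_f) — where y_f : y_B ∘ f ⇒ UFf ∘ y_A is the colax naturality 2-cell of y at f — exhibits UFf as a left U-extension of y_B ∘ f along y_A. In particular the 2-cell β_f := Ψ_B Ff ∘ ε_{FB} γ⁻¹ : ε_{FB} ∘ F(y_B f) ⇒ Ff is invertible and identifies the two U-extensions. -/
open CategoryTheory Bicategory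

universe w₁ v₁ u₁ w₂ v₂ u₂

variable {C : Type u₁} [Bicategory.{w₁, v₁} C] {D : Type u₂} [Bicategory.{w₂, v₂} D]

/-- A colax adjunction `F ⊣⊣ U` between pseudofunctors, given componentwise: colax natural
transformations `η : 1 ⇒ UF` and `ε : FU ⇒ 1` together with modifications
`Ψ : εF ∘ Fη ⟶ 1_F` and `Φ : 1_U ⟶ Uε ∘ ηU` satisfying the swallowtail identities. -/
structure ColaxAdjunction (F : Pseudofunctor D C) (U : Pseudofunctor C D) where
  /-- components of the colax natural unit `η : 1 ⇒ UF` -/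
  η : ∀ A : D, A ⟶ U.obj (F.obj A)
  /-- colax naturality 2-cells of the unit -/
  ηnat : ∀ {A B : D} (f : A ⟶ B), f ≫ η B ⟶ η A ≫ U.map (F.map f)
  /-- local naturality of the unit -/
  η_natural : ∀ {A B : D} {f g : A ⟶ B} (θ : f ⟶ g),
    θ ▷ η B ≫ ηnat g = ηnat f ≫ η A ◁ U.map₂ (F.map₂ θ)
  /-- unit axiom for the colax natural transformation `η` -/
  η_id : ∀ A : D, ηnat (𝟙 A) =
    (λ_ (η A)).hom ≫ (ρ_ (η A)).inv ≫
      η A ◁ ((U.mapId (F.obj A)).inv ≫ U.map₂ (F.mapId A).inv)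
  /-- composition axiom for the colax natural transformation `η` -/
  η_comp : ∀ {A B E : D} (f : A ⟶ B) (g : B ⟶ E), ηnat (f ≫ g) =
    (α_ f g (η E)).hom ≫ f ◁ ηnat g ≫ (α_ f (η B) (U.map (F.map g))).inv ≫
      ηnat f ▷ U.map (F.map g) ≫ (α_ (η A) (U.map (F.map f)) (U.map (F.map g))).hom ≫
      η A ◁ ((U.mapComp (F.map f) (F.map g)).inv ≫ U.map₂ (F.mapComp f g).inv)
  /-- components of the colax natural counit `ε : FU ⇒ 1` -/
  ε' : ∀ X : C, F.obj (U.obj X) ⟶ X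
  /-- colax naturality 2-cells of the counit -/
  εnat : ∀ {X Y : C} (h : X ⟶ Y), F.map (U.map h) ≫ ε' Y ⟶ ε' X ≫ h
  /-- local naturality of the counit -/
  ε_natural : ∀ {X Y : C} {h k : X ⟶ Y} (θ : h ⟶ k),
    F.map₂ (U.map₂ θ) ▷ ε' Y ≫ εnat k = εnat h ≫ ε' X ◁ θ
  /-- unit axiom for the colax natural transformation `ε` -/
  ε_id : ∀ X : C, εnat (𝟙 X) =
    (F.map₂ (U.mapId X).hom ≫ (F.mapId (U.obj X)).hom) ▷ ε' X ≫
      (λ_ (ε' X)).hom ≫ (ρ_ (ε' X)).inv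
  /-- composition axiom for the colax natural transformation `ε` -/
  ε_comp : ∀ {X Y Z : C} (h : X ⟶ Y) (k : Y ⟶ Z), εnat (h ≫ k) =
    (F.map₂ (U.mapComp h k).hom ≫ (F.mapComp (U.map h) (U.map k)).hom) ▷ ε' Z ≫
      (α_ (F.map (U.map h)) (F.map (U.map k)) (ε' Z)).hom ≫
      F.map (U.map h) ◁ εnat k ≫ (α_ (F.map (U.map h)) (ε' Y) k).inv ≫
      εnat h ▷ k ≫ (α_ (ε' X) h k).hom
  /-- components of the modification `Ψ : εF ∘ Fη ⟶ 1_F` -/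
  Ψ : ∀ A : D, F.map (η A) ≫ ε' (F.obj A) ⟶ 𝟙 (F.obj A)
  /-- components of the modification `Φ : 1_U ⟶ Uε ∘ ηU` -/
  Φ : ∀ X : C, 𝟙 (U.obj X) ⟶ η (U.obj X) ≫ U.map (ε' X)
  /-- the modification axiom for `Ψ` -/
  Ψ_mod : ∀ {A B : D} (f : A ⟶ B),
    F.map f ◁ Ψ B ≫ (ρ_ (F.map f)).hom ≫ (λ_ (F.map f)).inv =
      ((α_ (F.map f) (F.map (η B)) (ε' (F.obj B))).inv ≫
        ((F.mapComp f (η B)).inv ≫ F.map₂ (ηnat f) ≫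
          (F.mapComp (η A) (U.map (F.map f))).hom) ▷ ε' (F.obj B) ≫
        (α_ (F.map (η A)) (F.map (U.map (F.map f))) (ε' (F.obj B))).hom ≫
        F.map (η A) ◁ εnat (F.map f) ≫
        (α_ (F.map (η A)) (ε' (F.obj A)) (F.map f)).inv) ≫
      Ψ A ▷ F.map f
  /-- the modification axiom for `Φ` -/
  Φ_mod : ∀ {X Y : C} (h : X ⟶ Y),
    U.map h ◁ Φ Y ≫
      ((α_ (U.map h) (η (U.obj Y)) (U.map (ε' Y))).inv ≫
        ηnat (U.map h) ▷ U.map (ε' Y) ≫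
        (α_ (η (U.obj X)) (U.map (F.map (U.map h))) (U.map (ε' Y))).hom ≫
        η (U.obj X) ◁ ((U.mapComp (F.map (U.map h)) (ε' Y)).inv ≫
          U.map₂ (εnat h) ≫ (U.mapComp (ε' X) h).hom) ≫
        (α_ (η (U.obj X)) (U.map (ε' X)) (U.map h)).inv) =
      (ρ_ (U.map h)).hom ≫ (λ_ (U.map h)).inv ≫ Φ X ▷ U.map h
  /-- the swallowtail identity on the unit side -/
  swallowtail_unit : ∀ A : D,
    (ρ_ (η A)).inv ≫ η A ◁ Φ (F.obj A) ≫
      (α_ (η A) (η (U.obj (F.obj A))) (U.map (ε' (F.obj A)))).inv ≫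
      ηnat (η A) ▷ U.map (ε' (F.obj A)) ≫
      (α_ (η A) (U.map (F.map (η A))) (U.map (ε' (F.obj A)))).hom ≫
      η A ◁ ((U.mapComp (F.map (η A)) (ε' (F.obj A))).inv ≫ U.map₂ (Ψ A) ≫
        (U.mapId (F.obj A)).hom) ≫
      (ρ_ (η A)).hom = 𝟙 (η A)
  /-- the swallowtail identity on the counit side -/
  swallowtail_counit : ∀ X : C,
    (λ_ (ε' X)).inv ≫
      (((F.mapId (U.obj X)).inv ≫ F.map₂ (Φ X) ≫
        (F.mapComp (η (U.obj X)) (U.map (ε' X))).hom) ▷ ε' X) ≫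
      (α_ (F.map (η (U.obj X))) (F.map (U.map (ε' X))) (ε' X)).hom ≫
      F.map (η (U.obj X)) ◁ εnat (ε' X) ≫
      (α_ (F.map (η (U.obj X))) (ε' (F.obj (U.obj X))) (ε' X)).inv ≫
      Ψ (U.obj X) ▷ ε' X ≫ (λ_ (ε' X)).hom = 𝟙 (ε' X)

/-- `(f', ψ)` is a left `U`-extension of `f` along `y`. -/
def IsLeftUExtension (U : Pseudofunctor C D) {A : D} {FA : C} (y : A ⟶ U.obj FA)
    {B : C} (f : A ⟶ U.obj B) (f' : FA ⟶ B) (ψ : f ⟶ y ≫ U.map f') : Prop :=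
  ∀ (g : FA ⟶ B) (α : f ⟶ y ≫ U.map g), ∃! θ : f' ⟶ g, ψ ≫ y ◁ U.map₂ θ = α

variable (F : Pseudofunctor D C) (U : Pseudofunctor C D)

/-- The canonical `U`-extension 2-cell `𝔻_g : g ⟶ y_A ≫ U.map (F.map g ≫ ε_{B'})` obtained by
pasting the colax naturality cell `y_g` with `Φ_{B'}`. -/
def Dcell (adj : ColaxAdjunction F U) {A : D} {B' : C} (g : A ⟶ U.obj B') :
    g ⟶ adj.η A ≫ U.map (F.map g ≫ adj.ε' B') :=
  (ρ_ g).inv ≫ g ◁ adj.Φ B' ≫ (α_ g (adj.η (U.obj B')) (U.map (adj.ε' B'))).inv ≫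
    adj.ηnat g ▷ U.map (adj.ε' B') ≫
    (α_ (adj.η A) (U.map (F.map g)) (U.map (adj.ε' B'))).hom ≫
    adj.η A ◁ (U.mapComp (F.map g) (adj.ε' B')).inv

/-- The comparison 2-cell `β_f := Ψ_B F f ∘ ε_{FB} γ⁻¹ : ε_{FB} ∘ F(y_B f) ⟶ F f`. -/
def βcell (adj : ColaxAdjunction F U) {A B : D} (f : A ⟶ B) :
    F.map (f ≫ adj.η B) ≫ adj.ε' (F.obj B) ⟶ F.map f :=
  (F.mapComp f (adj.η B)).hom ▷ adj.ε' (F.obj B) ≫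
    (α_ (F.map f) (F.map (adj.η B)) (adj.ε' (F.obj B))).hom ≫
    F.map f ◁ adj.Ψ B ≫ (ρ_ (F.map f)).hom

/-!
For `g : A ⟶ U B'` the maps `θ ↦ Dcell g ≫ η_A ◁ U θ` and `α ↦ F α ▷ ε ≫ counitCell k` are
inverse bijections between 2-cells `F g ≫ ε ⟶ k` and `g ⟶ η_A ≫ U k`: their two triangle
identities reduce, via the composition axioms of `η` and `ε` and the modification axioms, to the
two swallowtail identities. So `(F g ≫ ε, Dcell g)` is a left `U`-extension of every `g`.
For `g = f ≫ η_B` the modification axiom for `Ψ` identifies the transpose of `η_f` with `β_f`,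
whence `η_f = Dcell (f ≫ η_B) ≫ η_A ◁ U β_f`; when `Ψ` is invertible so is `β_f`, and the
universal property transfers along it.
-/

namespace CategoryTheory.Pseudofunctor

variable {B₀ : Type*} [Bicategory B₀] {C₀ : Type*} [Bicategory C₀] (G : Pseudofunctor B₀ C₀)

lemma map₂_associator_inv {a b c d : B₀} (f : a ⟶ b) (g : b ⟶ c) (h : c ⟶ d) :
    G.map₂ (α_ f g h).inv = (G.mapComp f (g ≫ h)).hom ≫ G.map f ◁ (G.mapComp g h).hom ≫
      (α_ (G.map f) (G.map g) (G.map h)).inv ≫ (G.mapComp f g).inv ▷ G.map h ≫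
      (G.mapComp (f ≫ g) h).inv := by
  rw [← cancel_epi (G.map₂ (α_ f g h).hom), PrelaxFunctor.map₂_hom_inv]
  simp

lemma map₂_right_unitor_inv {a b : B₀} (f : a ⟶ b) :
    G.map₂ (ρ_ f).inv = (ρ_ (G.map f)).inv ≫ G.map f ◁ (G.mapId b).inv ≫
      (G.mapComp f (𝟙 b)).inv := by
  rw [← cancel_epi (G.map₂ (ρ_ f).hom), PrelaxFunctor.map₂_hom_inv]
  simp

end CategoryTheory.Pseudofunctor

namespace IsLeftUExtension

variable {U} {A : D} {FA : C} {y : A ⟶ U.obj FA} {B : C} {f : A ⟶ U.obj B}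

theorem of_isIso {f' f'' : FA ⟶ B} {ψ : f ⟶ y ≫ U.map f'}
    (h : IsLeftUExtension U y f f' ψ) (β : f' ⟶ f'') [IsIso β] :
    IsLeftUExtension U y f f'' (ψ ≫ y ◁ U.map₂ β) := by
  intro g α
  obtain ⟨θ, hθ, huniq⟩ := h g α
  refine ⟨inv β ≫ θ, ?_, fun θ' hθ' => ?_⟩
  · simpa [PrelaxFunctor.map₂_comp, ← whiskerLeft_comp_assoc] using hθ
  · rw [IsIso.eq_inv_comp]
    exact huniq _ (by simpa [PrelaxFunctor.map₂_comp] using hθ')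

end IsLeftUExtension

namespace ColaxAdjunction

variable {F U} (adj : ColaxAdjunction F U)

def counitCell {A : D} {B' : C} (k : F.obj A ⟶ B') :
    F.map (adj.η A ≫ U.map k) ≫ adj.ε' B' ⟶ k :=
  (F.mapComp (adj.η A) (U.map k)).hom ▷ adj.ε' B' ≫
    (α_ (F.map (adj.η A)) (F.map (U.map k)) (adj.ε' B')).hom ≫
    F.map (adj.η A) ◁ adj.εnat k ≫
    (α_ (F.map (adj.η A)) (adj.ε' (F.obj A)) k).inv ≫ adj.Ψ A ▷ k ≫ (λ_ k).hom

lemma counitCell_eq {A : D} {B' : C} (k : F.obj A ⟶ B') :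
    adj.counitCell k = (F.mapComp (adj.η A) (U.map k)).hom ▷ adj.ε' B' ⊗≫
      F.map (adj.η A) ◁ adj.εnat k ⊗≫ adj.Ψ A ▷ k ⊗≫ 𝟙 k := by
  rw [counitCell]; bicategory

lemma Dcell_eq {A : D} {B' : C} (g : A ⟶ U.obj B') :
    Dcell F U adj g = 𝟙 g ⊗≫ g ◁ adj.Φ B' ⊗≫ adj.ηnat g ▷ U.map (adj.ε' B') ⊗≫
      adj.η A ◁ (U.mapComp (F.map g) (adj.ε' B')).inv := by
  rw [Dcell]; bicategory

lemma Dcell_naturality {A : D} {B' : C} {g g' : A ⟶ U.obj B'} (α : g ⟶ g') :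
    Dcell F U adj g ≫ adj.η A ◁ U.map₂ (F.map₂ α ▷ adj.ε' B') = α ≫ Dcell F U adj g' := by
  calc Dcell F U adj g ≫ adj.η A ◁ U.map₂ (F.map₂ α ▷ adj.ε' B')
      = 𝟙 g ⊗≫ g ◁ adj.Φ B' ⊗≫
          (adj.ηnat g ≫ adj.η A ◁ U.map₂ (F.map₂ α)) ▷ U.map (adj.ε' B') ⊗≫
          adj.η A ◁ (U.mapComp (F.map g') (adj.ε' B')).inv := by
        rw [Dcell, U.map₂_whisker_right]
        simp only [whiskerLeft_comp, Category.assoc, whiskerLeft_inv_hom_assoc]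
        bicategory
    _ = 𝟙 g ⊗≫ (g ◁ adj.Φ B' ≫ α ▷ (adj.η (U.obj B') ≫ U.map (adj.ε' B'))) ⊗≫
          adj.ηnat g' ▷ U.map (adj.ε' B') ⊗≫
          adj.η A ◁ (U.mapComp (F.map g') (adj.ε' B')).inv := by
        rw [← adj.η_natural]; bicategory
    _ = α ≫ Dcell F U adj g' := by
        rw [whisker_exchange, Dcell_eq]; bicategory

lemma counitCell_naturality {A : D} {B' : C} {k k' : F.obj A ⟶ B'} (θ : k ⟶ k') :
    F.map₂ (adj.η A ◁ U.map₂ θ) ▷ adj.ε' B' ≫ adj.counitCell k' = adj.counitCell k ≫ θ := by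
  calc F.map₂ (adj.η A ◁ U.map₂ θ) ▷ adj.ε' B' ≫ adj.counitCell k'
      = (F.mapComp (adj.η A) (U.map k)).hom ▷ adj.ε' B' ⊗≫
          F.map (adj.η A) ◁ (F.map₂ (U.map₂ θ) ▷ adj.ε' B' ≫ adj.εnat k') ⊗≫
          adj.Ψ A ▷ k' ⊗≫ 𝟙 k' := by
        rw [counitCell, F.map₂_whisker_left]
        simp only [comp_whiskerRight, Category.assoc, inv_hom_whiskerRight_assoc]
        bicategory
    _ = (F.mapComp (adj.η A) (U.map k)).hom ▷ adj.ε' B' ⊗≫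
          F.map (adj.η A) ◁ adj.εnat k ⊗≫
          ((F.map (adj.η A) ≫ adj.ε' (F.obj A)) ◁ θ ≫ adj.Ψ A ▷ k') ⊗≫ 𝟙 k' := by
        rw [adj.ε_natural]; bicategory
    _ = adj.counitCell k ≫ θ := by
        rw [whisker_exchange, counitCell_eq]; bicategory

lemma swallowtail_unit_eq (A : D) :
    adj.η A ◁ adj.Φ (F.obj A) ⊗≫ adj.ηnat (adj.η A) ▷ U.map (adj.ε' (F.obj A)) ⊗≫
      adj.η A ◁ ((U.mapComp (F.map (adj.η A)) (adj.ε' (F.obj A))).inv ≫ U.map₂ (adj.Ψ A) ≫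
        (U.mapId (F.obj A)).hom) = 𝟙 (adj.η A ≫ 𝟙 (U.obj (F.obj A))) := by
  have h := adj.swallowtail_unit A
  rw [← cancel_epi (ρ_ (adj.η A)).inv, ← cancel_mono (ρ_ (adj.η A)).hom]
  convert h using 1 <;> bicategory

lemma Dcell_comp_counitCell_eq_pasting {A : D} {B' : C} (k : F.obj A ⟶ B') :
    Dcell F U adj (adj.η A ≫ U.map k) ≫ adj.η A ◁ U.map₂ (adj.counitCell k) =
      𝟙 _ ⊗≫ (adj.η A ≫ U.map k) ◁ adj.Φ B' ⊗≫
        (adj.η A ◁ adj.ηnat (U.map k)) ▷ U.map (adj.ε' B') ⊗≫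
        (adj.ηnat (adj.η A) ▷ (U.map (F.map (U.map k)) ≫ U.map (adj.ε' B')) ≫
          (adj.η A ≫ U.map (F.map (adj.η A))) ◁
            ((U.mapComp (F.map (U.map k)) (adj.ε' B')).inv ≫ U.map₂ (adj.εnat k) ≫
              (U.mapComp (adj.ε' (F.obj A)) k).hom)) ⊗≫
        adj.η A ◁ (((U.mapComp (F.map (adj.η A)) (adj.ε' (F.obj A))).inv ≫
          U.map₂ (adj.Ψ A) ≫ (U.mapId (F.obj A)).hom) ▷ U.map k) ⊗≫ 𝟙 _ := by
  calc Dcell F U adj (adj.η A ≫ U.map k) ≫ adj.η A ◁ U.map₂ (adj.counitCell k)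
      = 𝟙 _ ⊗≫ (adj.η A ≫ U.map k) ◁ adj.Φ B' ⊗≫
          (adj.η A ◁ adj.ηnat (U.map k)) ▷ U.map (adj.ε' B') ⊗≫
          (adj.ηnat (adj.η A) ▷ U.map (F.map (U.map k))) ▷ U.map (adj.ε' B') ⊗≫
          adj.η A ◁ (((U.mapComp (F.map (adj.η A)) (F.map (U.map k))).inv ≫
            U.map₂ (F.mapComp (adj.η A) (U.map k)).inv ≫
            U.map₂ (F.mapComp (adj.η A) (U.map k)).hom ≫
            (U.mapComp (F.map (adj.η A)) (F.map (U.map k))).hom) ▷ U.map (adj.ε' B')) ⊗≫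
          adj.η A ◁ (U.map (F.map (adj.η A)) ◁
            ((U.mapComp (F.map (U.map k)) (adj.ε' B')).inv ≫ U.map₂ (adj.εnat k) ≫
              (U.mapComp (adj.ε' (F.obj A)) k).hom)) ⊗≫
          adj.η A ◁ (((U.mapComp (F.map (adj.η A)) (adj.ε' (F.obj A))).inv ≫
            U.map₂ (adj.Ψ A) ≫ (U.mapId (F.obj A)).hom) ▷ U.map k) ⊗≫ 𝟙 _ := by
        rw [Dcell, counitCell, adj.η_comp]
        simp only [PrelaxFunctor.map₂_comp, Pseudofunctor.map₂_whisker_right,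
          Pseudofunctor.map₂_whisker_left, Pseudofunctor.map₂_associator,
          Pseudofunctor.map₂_left_unitor, Pseudofunctor.map₂_associator_inv, Category.assoc,
          Bicategory.whiskerLeft_comp, comp_whiskerRight, whiskerLeft_inv_hom_assoc,
          Iso.inv_hom_id_assoc]
        bicategory
    _ = _ := by
        simp only [PrelaxFunctor.map₂_inv_hom_assoc, Iso.inv_hom_id]
        bicategory

lemma Dcell_comp_counitCell {A : D} {B' : C} (k : F.obj A ⟶ B') :
    Dcell F U adj (adj.η A ≫ U.map k) ≫ adj.η A ◁ U.map₂ (adj.counitCell k) = 𝟙 _ := by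
  calc Dcell F U adj (adj.η A ≫ U.map k) ≫ adj.η A ◁ U.map₂ (adj.counitCell k)
      = 𝟙 _ ⊗≫ adj.η A ◁ (U.map k ◁ adj.Φ B' ≫
          ((α_ (U.map k) (adj.η (U.obj B')) (U.map (adj.ε' B'))).inv ≫
            adj.ηnat (U.map k) ▷ U.map (adj.ε' B') ≫
            (α_ (adj.η (U.obj (F.obj A))) (U.map (F.map (U.map k))) (U.map (adj.ε' B'))).hom ≫
            adj.η (U.obj (F.obj A)) ◁ ((U.mapComp (F.map (U.map k)) (adj.ε' B')).inv ≫
              U.map₂ (adj.εnat k) ≫ (U.mapComp (adj.ε' (F.obj A)) k).hom) ≫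
            (α_ (adj.η (U.obj (F.obj A))) (U.map (adj.ε' (F.obj A))) (U.map k)).inv)) ⊗≫
          (adj.ηnat (adj.η A) ▷ U.map (adj.ε' (F.obj A))) ▷ U.map k ⊗≫
          adj.η A ◁ (((U.mapComp (F.map (adj.η A)) (adj.ε' (F.obj A))).inv ≫
            U.map₂ (adj.Ψ A) ≫ (U.mapId (F.obj A)).hom) ▷ U.map k) ⊗≫ 𝟙 _ := by
        rw [Dcell_comp_counitCell_eq_pasting, ← whisker_exchange]; bicategory
    _ = 𝟙 _ ⊗≫ (adj.η A ◁ adj.Φ (F.obj A) ⊗≫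
          adj.ηnat (adj.η A) ▷ U.map (adj.ε' (F.obj A)) ⊗≫
          adj.η A ◁ ((U.mapComp (F.map (adj.η A)) (adj.ε' (F.obj A))).inv ≫
            U.map₂ (adj.Ψ A) ≫ (U.mapId (F.obj A)).hom)) ▷ U.map k ⊗≫ 𝟙 _ := by
        rw [adj.Φ_mod k]; bicategory
    _ = 𝟙 _ := by rw [swallowtail_unit_eq]; bicategory

lemma map₂_Dcell_comp_counitCell_eq_pasting {A : D} {B' : C} (g : A ⟶ U.obj B') :
    F.map₂ (Dcell F U adj g) ▷ adj.ε' B' ≫ adj.counitCell (F.map g ≫ adj.ε' B') =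
      𝟙 _ ⊗≫ (F.map g ◁ ((F.mapId (U.obj B')).inv ≫ F.map₂ (adj.Φ B') ≫
          (F.mapComp (adj.η (U.obj B')) (U.map (adj.ε' B'))).hom)) ▷ adj.ε' B' ⊗≫
        (((F.mapComp g (adj.η (U.obj B'))).inv ≫ F.map₂ (adj.ηnat g) ≫
            (F.mapComp (adj.η A) (U.map (F.map g))).hom) ▷
            (F.map (U.map (adj.ε' B')) ≫ adj.ε' B') ≫
          (F.map (adj.η A) ≫ F.map (U.map (F.map g))) ◁ adj.εnat (adj.ε' B')) ⊗≫
        F.map (adj.η A) ◁ (adj.εnat (F.map g) ▷ adj.ε' B') ⊗≫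
        adj.Ψ A ▷ (F.map g ≫ adj.ε' B') ⊗≫ 𝟙 _ := by
  calc F.map₂ (Dcell F U adj g) ▷ adj.ε' B' ≫ adj.counitCell (F.map g ≫ adj.ε' B')
      = 𝟙 _ ⊗≫ (F.map g ◁ ((F.mapId (U.obj B')).inv ≫ F.map₂ (adj.Φ B') ≫
            (F.mapComp (adj.η (U.obj B')) (U.map (adj.ε' B'))).hom)) ▷ adj.ε' B' ⊗≫
          (((F.mapComp g (adj.η (U.obj B'))).inv ≫ F.map₂ (adj.ηnat g) ≫
            (F.mapComp (adj.η A) (U.map (F.map g))).hom) ▷ F.map (U.map (adj.ε' B'))) ▷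
            adj.ε' B' ⊗≫
          F.map (adj.η A) ◁ (((F.mapComp (U.map (F.map g)) (U.map (adj.ε' B'))).inv ≫
            F.map₂ (U.mapComp (F.map g) (adj.ε' B')).inv ≫
            F.map₂ (U.mapComp (F.map g) (adj.ε' B')).hom ≫
            (F.mapComp (U.map (F.map g)) (U.map (adj.ε' B'))).hom) ▷ adj.ε' B') ⊗≫
          F.map (adj.η A) ◁ (F.map (U.map (F.map g)) ◁ adj.εnat (adj.ε' B')) ⊗≫
          F.map (adj.η A) ◁ (adj.εnat (F.map g) ▷ adj.ε' B') ⊗≫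
          adj.Ψ A ▷ (F.map g ≫ adj.ε' B') ⊗≫ 𝟙 _ := by
        rw [Dcell, counitCell, adj.ε_comp]
        simp only [PrelaxFunctor.map₂_comp, Pseudofunctor.map₂_whisker_right,
          Pseudofunctor.map₂_whisker_left, Pseudofunctor.map₂_associator,
          Pseudofunctor.map₂_associator_inv, Pseudofunctor.map₂_right_unitor_inv,
          Category.assoc, Bicategory.whiskerLeft_comp, comp_whiskerRight,
          inv_hom_whiskerRight_assoc, Iso.inv_hom_id_assoc]
        bicategory
    _ = _ := by
        simp only [PrelaxFunctor.map₂_inv_hom_assoc, Iso.inv_hom_id]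
        bicategory

lemma map₂_Dcell_comp_counitCell {A : D} {B' : C} (g : A ⟶ U.obj B') :
    F.map₂ (Dcell F U adj g) ▷ adj.ε' B' ≫ adj.counitCell (F.map g ≫ adj.ε' B') = 𝟙 _ := by
  calc F.map₂ (Dcell F U adj g) ▷ adj.ε' B' ≫ adj.counitCell (F.map g ≫ adj.ε' B')
      = 𝟙 _ ⊗≫ (F.map g ◁ ((F.mapId (U.obj B')).inv ≫ F.map₂ (adj.Φ B') ≫
            (F.mapComp (adj.η (U.obj B')) (U.map (adj.ε' B'))).hom)) ▷ adj.ε' B' ⊗≫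
          F.map g ◁ (F.map (adj.η (U.obj B')) ◁ adj.εnat (adj.ε' B')) ⊗≫
          ((((α_ (F.map g) (F.map (adj.η (U.obj B'))) (adj.ε' (F.obj (U.obj B')))).inv ≫
            ((F.mapComp g (adj.η (U.obj B'))).inv ≫ F.map₂ (adj.ηnat g) ≫
              (F.mapComp (adj.η A) (U.map (F.map g))).hom) ▷ adj.ε' (F.obj (U.obj B')) ≫
            (α_ (F.map (adj.η A)) (F.map (U.map (F.map g)))
              (adj.ε' (F.obj (U.obj B')))).hom ≫
            F.map (adj.η A) ◁ adj.εnat (F.map g) ≫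
            (α_ (F.map (adj.η A)) (adj.ε' (F.obj A)) (F.map g)).inv) ≫
            adj.Ψ A ▷ F.map g) ▷ adj.ε' B') ⊗≫ 𝟙 _ := by
        rw [map₂_Dcell_comp_counitCell_eq_pasting, ← whisker_exchange]; bicategory
    _ = 𝟙 _ ⊗≫ F.map g ◁ ((λ_ (adj.ε' B')).inv ≫
          (((F.mapId (U.obj B')).inv ≫ F.map₂ (adj.Φ B') ≫
            (F.mapComp (adj.η (U.obj B')) (U.map (adj.ε' B'))).hom) ▷ adj.ε' B') ≫
          (α_ (F.map (adj.η (U.obj B'))) (F.map (U.map (adj.ε' B'))) (adj.ε' B')).hom ≫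
          F.map (adj.η (U.obj B')) ◁ adj.εnat (adj.ε' B') ≫
          (α_ (F.map (adj.η (U.obj B'))) (adj.ε' (F.obj (U.obj B'))) (adj.ε' B')).inv ≫
          adj.Ψ (U.obj B') ▷ adj.ε' B' ≫ (λ_ (adj.ε' B')).hom) ⊗≫ 𝟙 _ := by
        rw [← adj.Ψ_mod g]; bicategory
    _ = 𝟙 _ := by rw [adj.swallowtail_counit B']; bicategory

lemma map₂_ηnat_comp_counitCell {A B : D} (f : A ⟶ B) :
    F.map₂ (adj.ηnat f) ▷ adj.ε' (F.obj B) ≫ adj.counitCell (F.map f) = βcell F U adj f := by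
  calc F.map₂ (adj.ηnat f) ▷ adj.ε' (F.obj B) ≫ adj.counitCell (F.map f)
      = ((F.mapComp f (adj.η B)).hom ≫ (F.mapComp f (adj.η B)).inv ≫
          F.map₂ (adj.ηnat f)) ▷ adj.ε' (F.obj B) ≫ adj.counitCell (F.map f) := by
        rw [Iso.hom_inv_id_assoc]
    _ = (F.mapComp f (adj.η B)).hom ▷ adj.ε' (F.obj B) ⊗≫
          (F.map f ◁ adj.Ψ B ≫ (ρ_ (F.map f)).hom ≫ (λ_ (F.map f)).inv) ⊗≫ 𝟙 _ := by
        rw [adj.Ψ_mod f, counitCell]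
        bicategory
    _ = βcell F U adj f := by rw [βcell]; bicategory

theorem isLeftUExtension_Dcell {A : D} {B' : C} (g : A ⟶ U.obj B') :
    IsLeftUExtension U (adj.η A) g (F.map g ≫ adj.ε' B') (Dcell F U adj g) := by
  intro k α
  refine ⟨F.map₂ α ▷ adj.ε' B' ≫ adj.counitCell k, ?_, fun θ hθ => ?_⟩
  · dsimp only
    rw [PrelaxFunctor.map₂_comp, whiskerLeft_comp, ← Category.assoc, Dcell_naturality,
      Category.assoc, Dcell_comp_counitCell, Category.comp_id]
  · dsimp only at hθ
    rw [← hθ, PrelaxFunctor.map₂_comp, comp_whiskerRight, Category.assoc,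
      counitCell_naturality, ← Category.assoc, map₂_Dcell_comp_counitCell, Category.id_comp]

lemma Dcell_comp_βcell {A B : D} (f : A ⟶ B) :
    Dcell F U adj (f ≫ adj.η B) ≫ adj.η A ◁ U.map₂ (βcell F U adj f) = adj.ηnat f := by
  rw [← map₂_ηnat_comp_counitCell, PrelaxFunctor.map₂_comp, whiskerLeft_comp, ← Category.assoc,
    Dcell_naturality, Category.assoc, Dcell_comp_counitCell, Category.comp_id]

instance isIso_βcell {A B : D} (f : A ⟶ B) [IsIso (adj.Ψ B)] : IsIso (βcell F U adj f) := by
  rw [βcell]; infer_instance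

end ColaxAdjunction

/-- for a colax adjunction `(Ψ, Φ) : (ε, y) : F ⊣⊣ U` with `Ψ` invertible, for
every 1-cell `f : A ⟶ B` in `D` the pair `(UFf, y_f)` exhibits `U (F f)` as a left
`U`-extension of `y_B ∘ f` along `y_A`; in particular `β_f` is invertible and identifies the
two `U`-extensions of `y_B ∘ f` along `y_A`. -/
theorem unit_naturality_is_UExtension (adj : ColaxAdjunction F U)
    (hΨ : ∀ A : D, IsIso (adj.Ψ A)) {A B : D} (f : A ⟶ B) :
    IsLeftUExtension U (adj.η A) (f ≫ adj.η B) (F.map f) (adj.ηnat f) ∧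
    IsIso (βcell F U adj f) ∧
    Dcell F U adj (f ≫ adj.η B) ≫ adj.η A ◁ U.map₂ (βcell F U adj f) = adj.ηnat f := by
  have : IsIso (adj.Ψ B) := hΨ B
  have hext := (adj.isLeftUExtension_Dcell (f ≫ adj.η B)).of_isIso (βcell F U adj f)
  rw [adj.Dcell_comp_βcell] at hext
  exact ⟨hext, inferInstance, adj.Dcell_comp_βcell f⟩
end

section
/- In the poset-enriched 2-category Par of sets and partial functions, both the empty set ∅ and the singleton set * are rali-terminal objects (for each set A, the poset Par(A, ∅) and the poset Par(A, *) each have a greatest element), yet ∅ and * are not equivalent objects of Par. Consequently rali-limits are not unique up to equivalence. -/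
open CategoryTheory

/-- The hom-order of the poset-enriched 2-category `Par` of sets and partial functions:
`f ≤ g` iff whenever `f` is defined at `a` (with value `b`), so is `g` with the same value. -/
def ParLe {A B : Type} (f g : A →. B) : Prop :=
  ∀ (a : A) (b : B), b ∈ f a → b ∈ g a

theorem parLe_of_isEmpty {A B : Type} [IsEmpty B] (f g : A →. B) : ParLe f g :=
  fun _ b _ => isEmptyElim b

theorem parLe_pure_of_subsingleton {A B : Type} [Subsingleton B] (f : A →. B) (b₀ : B) :
    ParLe f (PFun.pure b₀) :=
  fun _ b _ => Part.mem_some_iff.mpr (Subsingleton.elim b b₀)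

theorem PFun.isEmpty_of_comp_eq_id {A B : Type} [IsEmpty A] {u : A →. B} {v : B →. A}
    (h : u.comp v = PFun.id B) : IsEmpty B := by
  refine ⟨fun b => ?_⟩
  have hb : b ∈ (u.comp v) b := by rw [h]; exact Part.mem_some b
  obtain ⟨a, -, -⟩ := Part.mem_bind_iff.mp hb
  exact isEmptyElim a

/-- in `Par`, both `∅` and the singleton `*` are rali-terminal (each hom-poset
`Par(A, ∅)` and `Par(A, *)` has a greatest element), yet `∅` and `*` are not equivalent
objects of `Par` (equivalence in a poset-enriched 2-category forces isomorphism, i.e. mutually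
inverse 1-cells).  Consequently rali-limits are not unique up to equivalence. -/
theorem par_rali_terminal_not_unique :
    -- `∅` is rali-terminal
    (∀ A : Type, ∃ t : A →. Empty, ∀ f : A →. Empty, ParLe f t) ∧
    -- `*` is rali-terminal
    (∀ A : Type, ∃ t : A →. Unit, ∀ f : A →. Unit, ParLe f t) ∧
    -- `∅` and `*` are not equivalent (not isomorphic) in `Par`
    ¬ ∃ (u : ((Empty : Type) →. Unit)) (v : ((Unit : Type) →. Empty)),
        (v.comp u = PFun.id Empty ∧ u.comp v = PFun.id Unit) := by
  refine ⟨fun _ => ⟨fun _ => Part.none, fun f => parLe_of_isEmpty f _⟩,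
    fun _ => ⟨PFun.pure (), fun f => parLe_pure_of_subsingleton f ()⟩, ?_⟩
  rintro ⟨u, v, -, huv⟩
  exact not_isEmpty_of_nonempty Unit (PFun.isEmpty_of_comp_eq_id huv)
end
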